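/- The matrix N(z) defined on ℂ \ [−2,2] as above satisfies N(z) = I + O(1/z) as z → ∞. -/

import Mathlib

open Real Complex Filter Asymptotics

/-- `(z²−4)^t` with branches `arg(z±2) ∈ (−π,π)`: `(z−2)^t (z+2)^t` (principal powers). -/
noncomputable def zsqSub4Pow (z t : ℂ) : ℂ := (z - 2) ^ t * (z + 2) ^ t

/-- `φ(w) = w + √(w²−1)`, analytic in `ℂ \ [−1,1]` with `φ(w) ~ 2w` at infinity, the
square root being `(w−1)^{1/2}(w+1)^{1/2}` with principal branches. -/
noncomputable def joukowski (w : ℂ) : ℂ :=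
  w + (w - 1) ^ ((1 : ℂ) / 2) * (w + 1) ^ ((1 : ℂ) / 2)

/-- The global parametrix `N(z)`. -/
noncomputable def Nmat (α : ℝ) (L : ℂ) (z : ℂ) : Matrix (Fin 2) (Fin 2) ℂ :=
  !![zsqSub4Pow z ((1 : ℂ) / 4 - (α : ℂ)) * joukowski (z / 2) ^ ((2 : ℂ) * (α : ℂ) - 1 / 2),
     -Complex.I * Complex.exp L * zsqSub4Pow z ((α : ℂ) - 3 / 4)
       * joukowski (z / 2) ^ ((1 : ℂ) / 2 - 2 * (α : ℂ));
     Complex.I * Complex.exp (-L) * zsqSub4Pow z ((1 : ℂ) / 4 - (α : ℂ))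
       * joukowski (z / 2) ^ ((2 : ℂ) * (α : ℂ) - 3 / 2),
     zsqSub4Pow z ((α : ℂ) - 3 / 4) * joukowski (z / 2) ^ ((3 : ℂ) / 2 - 2 * (α : ℂ))]

/-!
For large `|z|` every entry of `N(z)` is, up to a constant, `(z - 2)^t (z + 2)^t φ(z/2)^s` with
`2t + s = 0` on the diagonal and `2t + s = -1` off it. Each base is `z` times a factor
`1 + O(1/z)`, and it lies on the same side of the real axis as `z` (for `φ` because the principal
square roots keep the sign of the imaginary part), so the principal logarithms split:
`log (z ∓ 2) = log z + O(1/z)` and `log φ(z/2) = log z + O(1/z)`. Hence the entry is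
`exp ((2t + s) log z + O(1/z))`, which is `1 + O(1/z)` or `z⁻¹ (1 + O(1/z))`.
-/

open Bornology Topology

namespace Complex

lemma im_mul_eq_norm_mul_norm_mul_sin_add_arg (u v : ℂ) :
    (u * v).im = ‖u‖ * ‖v‖ * Real.sin (arg u + arg v) := by
  rw [mul_im, Real.sin_add, ← norm_mul_cos_arg u, ← norm_mul_sin_arg u, ← norm_mul_cos_arg v,
    ← norm_mul_sin_arg v]
  ring

/-- `arg u + arg v` can only leave `(-π, π]` if multiplication by `v` carries `u` across the
negative real axis, and `him` forbids this. -/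
lemma log_mul_eq_add_log_of_re_pos {u v : ℂ} (hu : u ≠ 0) (hv : 0 < v.re)
    (him : 0 ≤ (u * v).im ↔ 0 ≤ u.im) : log (u * v) = log u + log v := by
  have hv₀ : v ≠ 0 := fun h => by simp [h] at hv
  have hvarg := abs_lt.1 (abs_arg_lt_pi_div_two_iff.2 (Or.inl hv))
  have hnorm : 0 < ‖u‖ * ‖v‖ := by positivity
  rw [log_mul_eq_add_log_iff hu hv₀, Set.mem_Ioc]
  constructor
  · by_contra! hlow
    have hsin : 0 ≤ Real.sin (arg u + arg v) := by
      have := Real.sin_nonpos_of_nonpos_of_neg_pi_le (x := arg u + arg v + π) (by linarith)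
        (by linarith [neg_pi_lt_arg u])
      rw [Real.sin_add_pi] at this
      linarith
    have hu_im : u.im < 0 := arg_neg_iff.1 (by linarith)
    have huv_im : 0 ≤ (u * v).im := by
      rw [im_mul_eq_norm_mul_norm_mul_sin_add_arg]
      positivity
    exact hu_im.not_ge (him.1 huv_im)
  · by_contra! hhigh
    have hsin : Real.sin (arg u + arg v) < 0 := by
      have := Real.sin_pos_of_pos_of_lt_pi (x := arg u + arg v - π) (by linarith)
        (by linarith [arg_le_pi u])
      rw [Real.sin_sub_pi] at this
      linarith
    have hu_im : 0 ≤ u.im := arg_nonneg_iff.1 (by linarith)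
    have huv_im : (u * v).im < 0 := by
      rw [im_mul_eq_norm_mul_norm_mul_sin_add_arg]
      exact mul_neg_of_pos_of_neg hnorm hsin
    exact huv_im.not_ge (him.2 hu_im)

end Complex

section Asymptotics

variable {α : Type*} {l : Filter α}

lemma isBigO_log_of_tendsto_one {v : α → ℂ} (hv : Tendsto v l (𝓝 1)) :
    (fun x => log (v x)) =O[l] fun x => v x - 1 := by
  have := ((hasDerivAt_log (by simp : (1 : ℂ) ∈ slitPlane)).isBigO_sub).comp_tendsto hv
  simpa [Function.comp_def] using this

lemma isBigO_exp_sub_one_of_tendsto_zero {E : α → ℂ} (hE : Tendsto E l (𝓝 0)) :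
    (fun x => exp (E x) - 1) =O[l] E := by
  have := ((Complex.hasDerivAt_exp 0).isBigO_sub).comp_tendsto hE
  simpa [Function.comp_def] using this

lemma isBigO_log_sub_log {f u g : α → ℂ} (hu : ∀ᶠ x in l, u x ≠ 0)
    (hfu : (fun x => f x / u x - 1) =O[l] g) (hg : Tendsto g l (𝓝 0))
    (him : ∀ᶠ x in l, (0 ≤ (f x).im ↔ 0 ≤ (u x).im)) :
    (fun x => log (f x) - log (u x)) =O[l] g := by
  have hv : Tendsto (fun x => f x / u x) l (𝓝 1) := by
    simpa using (hfu.trans_tendsto hg).add_const 1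
  have hre : ∀ᶠ x in l, 0 < (f x / u x).re :=
    (continuous_re.tendsto 1).comp hv |>.eventually (lt_mem_nhds (by simp))
  refine ((isBigO_log_of_tendsto_one hv).trans hfu).congr' ?_ EventuallyEq.rfl
  filter_upwards [hu, hre, him] with x hux hrex himx
  have hf : f x = u x * (f x / u x) := (mul_div_cancel₀ _ hux).symm
  rw [hf, log_mul_eq_add_log_of_re_pos hux hrex (by rwa [← hf]), mul_div_cancel_left₀ _ hux]
  ring

end Asymptotics

lemma isBigO_log_add_ofReal_sub_log (c : ℝ) :
    (fun z : ℂ => log (z + c) - log z) =O[cobounded ℂ] (·⁻¹) := by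
  refine isBigO_log_sub_log (eventually_ne_cobounded 0) ?_ tendsto_inv₀_cobounded
    (.of_forall fun z => by simp)
  refine ((isBigO_refl (·⁻¹) (cobounded ℂ)).const_mul_left (c : ℂ)).congr' ?_ EventuallyEq.rfl
  filter_upwards [eventually_ne_cobounded 0] with z hz
  field_simp
  ring

lemma joukowski_eq_add_exp {w : ℂ} (h₁ : w - 1 ≠ 0) (h₂ : w + 1 ≠ 0) :
    joukowski w = w + exp ((log (w - 1) + log (w + 1)) / 2) := by
  rw [joukowski, cpow_def_of_ne_zero h₁, cpow_def_of_ne_zero h₂, ← Complex.exp_add]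
  ring_nf

lemma joukowski_ne_zero (w : ℂ) : joukowski w ≠ 0 := by
  intro h
  have hsq : ((w - 1) ^ ((1 : ℂ) / 2) * (w + 1) ^ ((1 : ℂ) / 2)) ^ 2 = w ^ 2 - 1 := by
    rw [mul_pow, one_div, cpow_ofNat_inv_pow, cpow_ofNat_inv_pow]
    ring
  rw [joukowski, add_eq_zero_iff_eq_neg'] at h
  rw [h] at hsq
  exact one_ne_zero (by linear_combination hsq : (1 : ℂ) = 0)

lemma im_joukowski_nonneg_iff {w : ℂ} (h₁ : w - 1 ≠ 0) (h₂ : w + 1 ≠ 0) :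
    0 ≤ (joukowski w).im ↔ 0 ≤ w.im := by
  have him : (joukowski w).im
      = w.im + Real.exp ((log (w - 1) + log (w + 1)) / 2).re
        * Real.sin ((arg (w - 1) + arg (w + 1)) / 2) := by
    rw [joukowski_eq_add_exp h₁ h₂, add_im, exp_im]
    congr 3
    simp [log_im]
  rw [him]
  constructor
  · intro h
    by_contra! hw
    have hsin : Real.sin ((arg (w - 1) + arg (w + 1)) / 2) < 0 := by
      have : arg (w - 1) < 0 := arg_neg_iff.2 (by simpa using hw)
      have : arg (w + 1) < 0 := arg_neg_iff.2 (by simpa using hw)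
      exact Real.sin_neg_of_neg_of_neg_pi_lt (by linarith)
        (by linarith [neg_pi_lt_arg (w - 1), neg_pi_lt_arg (w + 1)])
    linarith [mul_neg_of_pos_of_neg (Real.exp_pos ((log (w - 1) + log (w + 1)) / 2).re) hsin]
  · intro hw
    have hsin : 0 ≤ Real.sin ((arg (w - 1) + arg (w + 1)) / 2) := by
      have : 0 ≤ arg (w - 1) := arg_nonneg_iff.2 (by simpa using hw)
      have : 0 ≤ arg (w + 1) := arg_nonneg_iff.2 (by simpa using hw)
      exact Real.sin_nonneg_of_nonneg_of_le_pi (by linarith)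
        (by linarith [arg_le_pi (w - 1), arg_le_pi (w + 1)])
    positivity

lemma eventually_sub_one_ne_zero_and_add_one_ne_zero :
    ∀ᶠ w in cobounded ℂ, w - 1 ≠ 0 ∧ w + 1 ≠ 0 := by
  filter_upwards [eventually_ne_cobounded 1, eventually_ne_cobounded (-1)] with w h₁ h₂
  exact ⟨sub_ne_zero.2 h₁, by rwa [Ne, add_eq_zero_iff_eq_neg]⟩

lemma isBigO_joukowski_div_sub_one :
    (fun w => joukowski w / (2 * w) - 1) =O[cobounded ℂ] (·⁻¹) := by
  set D : ℂ → ℂ := fun w => 2⁻¹ * ((log (w - 1) - log w) + (log (w + 1) - log w))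
  have hsub : (fun w : ℂ => log (w - 1) - log w) =O[cobounded ℂ] (·⁻¹) := by
    simpa [← sub_eq_add_neg] using isBigO_log_add_ofReal_sub_log (-1)
  have hadd : (fun w : ℂ => log (w + 1) - log w) =O[cobounded ℂ] (·⁻¹) := by
    simpa using isBigO_log_add_ofReal_sub_log 1
  have hD : D =O[cobounded ℂ] (·⁻¹) := (hsub.add hadd).const_mul_left _
  refine ((isBigO_exp_sub_one_of_tendsto_zero (hD.trans_tendsto tendsto_inv₀_cobounded)).trans
    hD).const_mul_left 2⁻¹ |>.congr' ?_ EventuallyEq.rfl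
  filter_upwards [eventually_ne_cobounded 0, eventually_sub_one_ne_zero_and_add_one_ne_zero]
    with w hw ⟨h₁, h₂⟩
  have hexp : exp ((log (w - 1) + log (w + 1)) / 2) = w * exp (D w) := by
    rw [show (log (w - 1) + log (w + 1)) / 2 = log w + D w by simp only [D]; ring, Complex.exp_add,
      exp_log hw]
  rw [joukowski_eq_add_exp h₁ h₂, hexp]
  field_simp
  ring

lemma isBigO_log_joukowski_sub_log :
    (fun w => log (joukowski w) - log (2 * w)) =O[cobounded ℂ] (·⁻¹) := by
  refine isBigO_log_sub_log ?_ isBigO_joukowski_div_sub_one tendsto_inv₀_cobounded ?_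
  · filter_upwards [eventually_ne_cobounded 0] with w hw
    exact mul_ne_zero two_ne_zero hw
  · filter_upwards [eventually_sub_one_ne_zero_and_add_one_ne_zero] with w ⟨h₁, h₂⟩
    rw [im_joukowski_nonneg_iff h₁ h₂]
    simp

lemma isBigO_log_joukowski_half_sub_log :
    (fun z => log (joukowski (z / 2)) - log z) =O[cobounded ℂ] (·⁻¹) := by
  have h := isBigO_log_joukowski_sub_log.comp_tendsto
    (tendsto_mul_right_cobounded (inv_ne_zero (two_ne_zero (α := ℂ))))
  refine (h.trans ?_).congr' (.of_forall fun z => ?_) EventuallyEq.rfl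
  · simpa [Function.comp_def, mul_comm] using
      (isBigO_refl (·⁻¹) (cobounded ℂ)).const_mul_left (2 : ℂ)
  · simp only [Function.comp_apply]
    ring_nf

noncomputable def logRemainder (t s z : ℂ) : ℂ :=
  t * (log (z - 2) - log z) + t * (log (z + 2) - log z) + s * (log (joukowski (z / 2)) - log z)

lemma isBigO_logRemainder (t s : ℂ) : logRemainder t s =O[cobounded ℂ] (·⁻¹) := by
  have hsub : (fun z : ℂ => log (z - 2) - log z) =O[cobounded ℂ] (·⁻¹) := by
    simpa [← sub_eq_add_neg] using isBigO_log_add_ofReal_sub_log (-2)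
  have hadd : (fun z : ℂ => log (z + 2) - log z) =O[cobounded ℂ] (·⁻¹) := by
    simpa using isBigO_log_add_ofReal_sub_log 2
  exact ((hsub.const_mul_left t).add (hadd.const_mul_left t)).add
    (isBigO_log_joukowski_half_sub_log.const_mul_left s)

lemma eventually_zsqSub4Pow_mul_joukowski_cpow_eq (t s : ℂ) :
    ∀ᶠ z in cobounded ℂ,
      zsqSub4Pow z t * joukowski (z / 2) ^ s = exp ((2 * t + s) * log z + logRemainder t s z) := by
  filter_upwards [eventually_ne_cobounded 2, eventually_ne_cobounded (-2)] with z h₁ h₂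
  rw [zsqSub4Pow, cpow_def_of_ne_zero (sub_ne_zero.2 h₁),
    cpow_def_of_ne_zero (by rwa [Ne, add_eq_zero_iff_eq_neg]),
    cpow_def_of_ne_zero (joukowski_ne_zero _), ← Complex.exp_add, ← Complex.exp_add, logRemainder]
  ring_nf

lemma isBigO_zsqSub4Pow_mul_joukowski_cpow_sub_one {t s : ℂ} (h : 2 * t + s = 0) :
    (fun z => zsqSub4Pow z t * joukowski (z / 2) ^ s - 1) =O[cobounded ℂ] (·⁻¹) := by
  have hR := isBigO_logRemainder t s
  refine ((isBigO_exp_sub_one_of_tendsto_zero (hR.trans_tendsto tendsto_inv₀_cobounded)).trans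
    hR).congr' ?_ EventuallyEq.rfl
  filter_upwards [eventually_zsqSub4Pow_mul_joukowski_cpow_eq t s] with z hz
  rw [hz, h, zero_mul, zero_add]

lemma isBigO_const_mul_zsqSub4Pow_mul_joukowski_cpow (c : ℂ) {t s : ℂ} (h : 2 * t + s = -1) :
    (fun z => c * zsqSub4Pow z t * joukowski (z / 2) ^ s) =O[cobounded ℂ] (·⁻¹) := by
  have hR := isBigO_logRemainder t s
  have hexp : (fun z => exp (logRemainder t s z)) =O[cobounded ℂ] (fun _ => (1 : ℂ)) :=
    ((hR.trans_tendsto tendsto_inv₀_cobounded).cexp).isBigO_one ℂ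
  refine ((((isBigO_refl (·⁻¹) (cobounded ℂ)).const_mul_left c).mul hexp).trans
    (by simpa using isBigO_refl (·⁻¹) (cobounded ℂ))).congr' ?_ EventuallyEq.rfl
  filter_upwards [eventually_zsqSub4Pow_mul_joukowski_cpow_eq t s, eventually_ne_cobounded 0]
    with z hz hz₀
  rw [mul_assoc c (zsqSub4Pow z t), hz, h, Complex.exp_add, neg_one_mul, Complex.exp_neg,
    exp_log hz₀, mul_assoc]

theorem Nmat_eq_id_add_bigO_general (α : ℝ) (L : ℂ) :
    ∀ i j : Fin 2,
      (fun z : ℂ => Nmat α L z i j - (1 : Matrix (Fin 2) (Fin 2) ℂ) i j)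
        =O[Bornology.cobounded ℂ] (fun z : ℂ => 1 / z) := by
  intro i j
  simp only [one_div]
  fin_cases i <;> fin_cases j
  · simpa [Nmat] using isBigO_zsqSub4Pow_mul_joukowski_cpow_sub_one (t := 1 / 4 - α)
      (s := 2 * α - 1 / 2) (by ring)
  · simpa [Nmat] using isBigO_const_mul_zsqSub4Pow_mul_joukowski_cpow (-I * exp L)
      (t := α - 3 / 4) (s := 1 / 2 - 2 * α) (by ring)
  · simpa [Nmat] using isBigO_const_mul_zsqSub4Pow_mul_joukowski_cpow (I * exp (-L))
      (t := 1 / 4 - α) (s := 2 * α - 3 / 2) (by ring)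
  · simpa [Nmat] using isBigO_zsqSub4Pow_mul_joukowski_cpow_sub_one (t := α - 3 / 4)
      (s := 3 / 2 - 2 * α) (by ring)

/-- `N(z) = I + O(1/z)` as `z → ∞`: each entry of `N(z) − I` is `O(1/z)` at infinity. -/
theorem Nmat_eq_id_add_bigO (α : ℝ) (hα : 0 < α) (L : ℂ) :
    ∀ i j : Fin 2,
      (fun z : ℂ => Nmat α L z i j - (1 : Matrix (Fin 2) (Fin 2) ℂ) i j)
        =O[Bornology.cobounded ℂ] (fun z : ℂ => 1 / z) :=
  Nmat_eq_id_add_bigO_general α L
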